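/- Let ((ξ_{u,i})_{i≥0})_{u∈𝕌} be an i.i.d. family of random sequences with values in the set of sequences (x_i)_{i≥0} with x_i ∈ [0,1) for all i and Σ_{i≥0} x_i = 1, such that E[ξ_0 + ξ_1] < 1, let β ∈ (0,1) and let p be such that pβ > 1. Then lim_{k→∞} limsup_{n→∞} Σ_{u} E[ξ̄_u^{pβ}] = 0, where for given k and n ≥ k+1 the sum is over all words of the form u = w v j with w ∈ ℕ^k, v ∈ {0,1}^t for some 0 ≤ t ≤ n−k−1, and j ∈ {2,3,4,…}. -/

import Mathlib

open MeasureTheory ProbabilityTheory Filter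
open scoped ENNReal Topology

noncomputable section

/-- `ξ̄_u`: the product of the entries of the sequences attached along the path from the
root to the word `u`, i.e. `ξ̄_{u₁…uₙ} = ∏_{k=1}^n ξ_{u₁…u_{k-1}, u_k}`, with `ξ̄_∅ = 1`. -/
def xibar {Ω : Type*} (ξ : List ℕ → ℕ → Ω → ℝ) (u : List ℕ) (ω : Ω) : ℝ :=
  ∏ k ∈ Finset.range u.length, ξ (u.take k) (u.getD k 0) ω

/-!
The factors of `ξ̄_u` sit at the distinct prefixes of `u`, so by independence and identical
distribution `E[ξ̄_u^q] = ∏ c(u_i)` with `c i = E[ξ_i^q]`, `q = pβ`. Since `0 ≤ ξ_i < 1` and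
`Σ ξ_i = 1`, we have `ξ_i^q ≤ ξ_i` with strict inequality somewhere, hence `C = Σ c_i < 1`.
Summing over `w ∈ ℕ^k` gives `C^k`, over `v ∈ {0,1}^t` gives `(c 0 + c 1)^t` with
`c 0 + c 1 ≤ C < 1`, and over `j ≥ 2` at most `C`; so the `n`-th sum is bounded by
`C^k (1 - c 0 - c 1)⁻¹ C`, which tends to `0` as `k → ∞`.
-/

open Finset

lemma xibar_eq_prod_fin {Ω : Type*} (ξ : List ℕ → ℕ → Ω → ℝ) (u : List ℕ) (ω : Ω) :
    xibar ξ u ω = ∏ k : Fin u.length, ξ (u.take k) u[k] ω := by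
  rw [xibar, ← Fin.prod_univ_eq_prod_range]
  refine prod_congr rfl fun k _ => ?_
  rw [List.getD_eq_getElem _ _ k.isLt]
  rfl

theorem lintegral_ofReal_xibar_rpow {Ω : Type*} [MeasurableSpace Ω] {P : Measure Ω}
    {ξ : List ℕ → ℕ → Ω → ℝ} (hmeas : ∀ u i, Measurable (ξ u i))
    (hindep : iIndepFun (fun u ω i => ξ u i ω) P)
    (hident : ∀ u : List ℕ, IdentDistrib (fun ω i => ξ u i ω) (fun ω i => ξ [] i ω) P P)
    (hnonneg : ∀ u i, ∀ᵐ ω ∂P, 0 ≤ ξ u i ω) (q : ℝ) (u : List ℕ) :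
    ∫⁻ ω, ENNReal.ofReal (xibar ξ u ω ^ q) ∂P
      = (u.map fun i => ∫⁻ ω, ENNReal.ofReal (ξ [] i ω ^ q) ∂P).prod := by
  set X : Fin u.length → Ω → ℝ≥0∞ := fun k ω => ENNReal.ofReal (ξ (u.take k) u[k] ω ^ q)
  have hXmeas : ∀ k, Measurable (X k) := fun k => by fun_prop
  -- distinct letters of `u` are read from the sequences at distinct prefixes of `u`
  have hX : iIndepFun X P := by
    have htake : Function.Injective fun k : Fin u.length => u.take k := fun k l h => by
      have := congrArg List.length h
      simp only [List.length_take, min_eq_left k.isLt.le, min_eq_left l.isLt.le] at this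
      exact Fin.ext this
    exact (hindep.precomp htake).comp (fun k x => ENNReal.ofReal (x u[k] ^ q)) fun k => by fun_prop
  have hfactor : ∀ᵐ ω ∂P, ENNReal.ofReal (xibar ξ u ω ^ q) = ∏ k, X k ω := by
    have h : ∀ᵐ ω ∂P, ∀ k : Fin u.length, 0 ≤ ξ (u.take k) u[k] ω :=
      ae_all_iff.2 fun k => hnonneg _ _
    filter_upwards [h] with ω hω
    rw [xibar_eq_prod_fin, ← Real.finsetProd_rpow _ _ fun k _ => hω k,
      ENNReal.ofReal_prod_of_nonneg fun k _ => Real.rpow_nonneg (hω k) q]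
  rw [lintegral_congr_ae hfactor, lintegral_prod_eq_prod_lintegral_of_indepFun _ X hX hXmeas,
    ← Fin.prod_univ_fun_getElem]
  exact prod_congr rfl fun k _ =>
    ((hident _).comp (u := fun x : ℕ → ℝ => ENNReal.ofReal (x u[k] ^ q)) (by fun_prop)).lintegral_eq

theorem tsum_ofReal_rpow_lt_one {ι : Type*} {x : ι → ℝ} (hx : ∀ i, x i ∈ Set.Ico 0 1)
    (hsum : ∑' i, x i = 1) {q : ℝ} (hq : 1 < q) : ∑' i, ENNReal.ofReal (x i ^ q) < 1 := by
  have hsummable : Summable x := by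
    by_contra h
    simp [tsum_eq_zero_of_not_summable h] at hsum
  have hsum' : ∑' i, ENNReal.ofReal (x i) = 1 := by
    rw [← ENNReal.ofReal_tsum_of_nonneg (fun i => (hx i).1) hsummable, hsum, ENNReal.ofReal_one]
  obtain ⟨i₀, hi₀⟩ : ∃ i, 0 < x i := by
    by_contra! h
    simp [tsum_congr fun i => le_antisymm (h i) (hx i).1] at hsum
  have hle : ∀ i, ENNReal.ofReal (x i ^ q) ≤ ENNReal.ofReal (x i) := fun i =>
    ENNReal.ofReal_le_ofReal <| by
      simpa using Real.rpow_le_rpow_of_exponent_ge' (hx i).1 (hx i).2.le zero_le_one hq.le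
  have hlt : ENNReal.ofReal (x i₀ ^ q) < ENNReal.ofReal (x i₀) := by
    rw [ENNReal.ofReal_lt_ofReal_iff hi₀]
    simpa using Real.rpow_lt_rpow_of_exponent_gt hi₀ (hx i₀).2 hq
  calc ∑' i, ENNReal.ofReal (x i ^ q) < ∑' i, ENNReal.ofReal (x i) :=
        ENNReal.tsum_lt_tsum (ne_top_of_le_ne_top (by simp [hsum']) (ENNReal.tsum_le_tsum hle))
          hle hlt
    _ = 1 := hsum'

theorem tsum_lintegral_rpow_lt_one {Ω ι : Type*} [MeasurableSpace Ω] {P : Measure Ω}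
    [IsProbabilityMeasure P] [Countable ι] {X : ι → Ω → ℝ} (hX : ∀ i, Measurable (X i))
    (hval : ∀ᵐ ω ∂P, (∀ i, X i ω ∈ Set.Ico (0 : ℝ) 1) ∧ ∑' i, X i ω = 1) {q : ℝ} (hq : 1 < q) :
    ∑' i, ∫⁻ ω, ENNReal.ofReal (X i ω ^ q) ∂P < 1 := by
  have hlt : ∀ᵐ ω ∂P, ∑' i, ENNReal.ofReal (X i ω ^ q) < 1 :=
    hval.mono fun ω h => tsum_ofReal_rpow_lt_one h.1 h.2 hq
  rw [← lintegral_tsum fun i => (by fun_prop : Measurable _).aemeasurable]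
  calc ∫⁻ ω, ∑' i, ENNReal.ofReal (X i ω ^ q) ∂P
      < ∫⁻ _, 1 ∂P := lintegral_strict_mono (IsProbabilityMeasure.ne_zero P) aemeasurable_const
        (ne_top_of_le_ne_top (by simp) (lintegral_mono_ae (hlt.mono fun ω h => h.le))) hlt
    _ = 1 := by simp

theorem tsum_pi_fin_prod {ι : Type*} (c : ι → ℝ≥0∞) :
    ∀ k : ℕ, ∑' w : Fin k → ι, ∏ i, c (w i) = (∑' i, c i) ^ k
  | 0 => by simp
  | k + 1 => by
    rw [← (Fin.consEquiv fun _ : Fin (k + 1) => ι).tsum_eq, ENNReal.tsum_prod']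
    simp only [Fin.consEquiv_apply, Fin.prod_univ_succ, Fin.cons_zero, Fin.cons_succ,
      ENNReal.tsum_mul_left, ENNReal.tsum_mul_right, tsum_pi_fin_prod c k, pow_succ']

theorem sum_pi_fin_two_prod {M : Type*} [CommSemiring M] (c : ℕ → M) (t : ℕ) :
    ∑ v : Fin t → Fin 2, ∏ i, c (v i) = (c 0 + c 1) ^ t := by
  rw [← Fintype.prod_sum (fun _ (j : Fin 2) => c j)]
  simp

section Words

variable (c : ℕ → ℝ≥0∞)

theorem tsum_prod_map_words (k N : ℕ) :
    ∑' w : Fin k → ℕ, ∑ t ∈ range N, ∑ v : Fin t → Fin 2, ∑' j : ℕ,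
        ((List.ofFn w ++ List.ofFn (fun i => (v i : ℕ)) ++ [j + 2]).map c).prod
      = (∑' i, c i) ^ k * ((∑ t ∈ range N, (c 0 + c 1) ^ t) * ∑' j, c (j + 2)) := by
  simp only [List.map_append, List.prod_append, List.map_ofFn, List.prod_ofFn,
    List.map_cons, List.map_nil, List.prod_singleton, Function.comp_apply,
    ENNReal.tsum_mul_left, ← Finset.mul_sum, ← Finset.sum_mul, sum_pi_fin_two_prod,
    ENNReal.tsum_mul_right, tsum_pi_fin_prod, mul_assoc]

theorem tendsto_limsup_tsum_prod_map_words (hc : ∑' i, c i < 1) :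
    Tendsto (fun k : ℕ => limsup (fun n : ℕ =>
        ∑' w : Fin k → ℕ, ∑ t ∈ range (n - k), ∑ v : Fin t → Fin 2, ∑' j : ℕ,
          ((List.ofFn w ++ List.ofFn (fun i => (v i : ℕ)) ++ [j + 2]).map c).prod) atTop)
      atTop (𝓝 0) := by
  set C := ∑' i, c i
  have hpair : c 0 + c 1 < 1 := by
    refine lt_of_le_of_lt ?_ hc
    simpa [sum_pair] using ENNReal.sum_le_tsum (f := c) {0, 1}
  have htail : ∑' j, c (j + 2) ≤ C :=
    ENNReal.tsum_comp_le_tsum_of_injective (add_left_injective 2) c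
  -- the sum over `t` is a partial sum of a convergent geometric series, uniformly in `n`
  have hbound : ∀ k n, ∑' w : Fin k → ℕ, ∑ t ∈ range (n - k), ∑ v : Fin t → Fin 2, ∑' j : ℕ,
      ((List.ofFn w ++ List.ofFn (fun i => (v i : ℕ)) ++ [j + 2]).map c).prod
        ≤ C ^ k * ((1 - (c 0 + c 1))⁻¹ * C) := fun k n => by
    rw [tsum_prod_map_words, ← ENNReal.tsum_geometric]
    gcongr
    exact ENNReal.sum_le_tsum _
  have hK : (1 - (c 0 + c 1))⁻¹ * C ≠ ∞ :=
    ENNReal.mul_ne_top (by simpa [tsub_eq_zero_iff_le] using hpair)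
      (hc.trans ENNReal.one_lt_top).ne
  refine tendsto_of_tendsto_of_tendsto_of_le_of_le tendsto_const_nhds ?_ (fun k => zero_le)
    fun k => limsup_le_of_le (by isBoundedDefault) (Eventually.of_forall (hbound k))
  simpa using ENNReal.Tendsto.mul_const (ENNReal.tendsto_pow_atTop_nhds_zero_of_lt_one hc) (Or.inr hK)

end Words

theorem stmt11_general {Ω : Type*} [m0 : MeasurableSpace Ω] {P : Measure Ω} [IsProbabilityMeasure P]
    (ξ : List ℕ → ℕ → Ω → ℝ)
    (hmeas : ∀ u i, Measurable (ξ u i))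
    (hindep : iIndepFun
      (fun u ω i => ξ u i ω) P)
    (hident : ∀ u : List ℕ, IdentDistrib (fun ω i => ξ u i ω) (fun ω i => ξ [] i ω) P P)
    (hval : ∀ u : List ℕ, ∀ᵐ ω ∂P,
      (∀ i, ξ u i ω ∈ Set.Ico (0 : ℝ) 1) ∧ (∑' i, ξ u i ω) = 1)
    (β : ℝ) (p : ℝ) (hpβ : 1 < p * β) :
    Tendsto (fun k : ℕ =>
        Filter.limsup (fun n : ℕ =>
          ∑' w : Fin k → ℕ, ∑ t ∈ Finset.range (n - k), ∑ v : Fin t → Fin 2, ∑' j : ℕ,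
            ∫⁻ ω, ENNReal.ofReal
              ((xibar ξ
                  (List.ofFn w ++ (List.ofFn fun i => ((v i : ℕ))) ++ [j + 2]) ω)
                ^ (p * β)) ∂P) atTop)
      atTop (𝓝 0) := by
  have hnonneg : ∀ u i, ∀ᵐ ω ∂P, 0 ≤ ξ u i ω := fun u i => (hval u).mono fun _ h => (h.1 i).1
  simp_rw [lintegral_ofReal_xibar_rpow hmeas hindep hident hnonneg]
  exact tendsto_limsup_tsum_prod_map_words _ (tsum_lintegral_rpow_lt_one (hmeas []) (hval []) hpβ)

/-- For an i.i.d. family `(ξ_{u,·})_{u∈𝕌}` of random sequences with values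
in `[0,1)` summing to `1`, with `E[ξ_0 + ξ_1] < 1`, `β ∈ (0,1)` and `pβ > 1`,
`lim_{k→∞} limsup_{n→∞} Σ_u E[ξ̄_u^{pβ}] = 0`, where for given `k` and `n ≥ k+1` the sum is
over all words `u = w v j` with `w ∈ ℕ^k`, `v ∈ {0,1}^t` for some `0 ≤ t ≤ n-k-1`, and
`j ∈ {2,3,…}`. -/
theorem stmt11 {Ω : Type*} [m0 : MeasurableSpace Ω] {P : Measure Ω} [IsProbabilityMeasure P]
    (ξ : List ℕ → ℕ → Ω → ℝ)
    (hmeas : ∀ u i, Measurable (ξ u i))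
    (hindep : iIndepFun
      (fun u ω i => ξ u i ω) P)
    (hident : ∀ u : List ℕ, IdentDistrib (fun ω i => ξ u i ω) (fun ω i => ξ [] i ω) P P)
    (hval : ∀ u : List ℕ, ∀ᵐ ω ∂P,
      (∀ i, ξ u i ω ∈ Set.Ico (0 : ℝ) 1) ∧ (∑' i, ξ u i ω) = 1)
    (hmean : ∫ ω, (ξ [] 0 ω + ξ [] 1 ω) ∂P < 1)
    (β : ℝ) (hβ : β ∈ Set.Ioo (0 : ℝ) 1) (p : ℝ) (hpβ : 1 < p * β) :
    Tendsto (fun k : ℕ =>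
        Filter.limsup (fun n : ℕ =>
          ∑' w : Fin k → ℕ, ∑ t ∈ Finset.range (n - k), ∑ v : Fin t → Fin 2, ∑' j : ℕ,
            ∫⁻ ω, ENNReal.ofReal
              ((xibar ξ
                  (List.ofFn w ++ (List.ofFn fun i => ((v i : ℕ))) ++ [j + 2]) ω)
                ^ (p * β)) ∂P) atTop)
      atTop (𝓝 0) :=
  stmt11_general (m0 := m0) ξ hmeas hindep hident hval β p hpβ
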